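/- Fix β with 1 < β < 2 and let J_β(α) := ∫_0^1 λ^{−β/2} · min( α^β (1−λ)^{−β/2} , λ^{−β/2} ) dλ for α > 0. There exist constants 0 < c ≤ C (depending only on β) such that for all α with 0 < α < 1: c·α^β ≤ J_β(α) ≤ C·α^β, and for all α ≥ 1: c·α^{2β−2} ≤ J_β(α) ≤ C·α^{2β−2}. -/

import Mathlib

open MeasureTheory

/-- `J_β(α) = ∫_0^1 λ^{-β/2} min(α^β (1-λ)^{-β/2}, λ^{-β/2}) dλ`. -/
noncomputable def Jbeta (β α : ℝ) : ℝ :=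
  ∫ l in Set.Ioo (0 : ℝ) 1,
    l ^ (-(β / 2)) * min (α ^ β * (1 - l) ^ (-(β / 2))) (l ^ (-(β / 2)))

section JbetaAux
open Set

open MeasureTheory Set

private lemma JcontOn (β α : ℝ) :
    ContinuousOn (fun l : ℝ =>
      l ^ (-(β / 2)) * min (α ^ β * (1 - l) ^ (-(β / 2))) (l ^ (-(β / 2)))) (Ioo 0 1) := by
  have h1 : ContinuousOn (fun l : ℝ => l ^ (-(β / 2))) (Ioo (0:ℝ) 1) := fun l hl =>
    (Real.continuousAt_rpow_const _ _ (Or.inl hl.1.ne')).continuousWithinAt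
  have h2 : ContinuousOn (fun l : ℝ => α ^ β * (1 - l) ^ (-(β / 2))) (Ioo (0:ℝ) 1) := by
    refine continuousOn_const.mul (fun l hl => ContinuousAt.continuousWithinAt ?_)
    exact (Real.continuousAt_rpow_const (1 - l) _
      (Or.inl (sub_pos.mpr hl.2).ne')).comp (continuousAt_const.sub continuousAt_id)
  exact h1.mul (fun l hl => ((h2 l hl).min (h1 l hl)))

private lemma int_Ioo_rpow_zero {p : ℝ} (hp : -1 < p) {b : ℝ} (hb : 0 < b) :
    ∫ l in Ioo (0:ℝ) b, l ^ p = b ^ (p + 1) / (p + 1) := by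
  rw [← integral_Ioc_eq_integral_Ioo, ← intervalIntegral.integral_of_le hb.le,
    integral_rpow (Or.inl hp), Real.zero_rpow (by linarith), sub_zero]

private lemma int_Ioo_rpow_pos {p : ℝ} (hp : p ≠ -1) {a b : ℝ} (ha : 0 < a) (hab : a ≤ b) :
    ∫ l in Ioo a b, l ^ p = (b ^ (p + 1) - a ^ (p + 1)) / (p + 1) := by
  rw [← integral_Ioc_eq_integral_Ioo, ← intervalIntegral.integral_of_le hab,
    integral_rpow (Or.inr ⟨hp, Set.notMem_uIcc_of_lt ha (lt_of_lt_of_le ha hab)⟩)]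

private lemma integrableBeta {p : ℝ} (hp1 : -1 < p) (hp0 : p ≤ 0) :
    IntegrableOn (fun l : ℝ => l ^ p * (1 - l) ^ p) (Ioo 0 1) := by
  have hA : IntegrableOn (fun l : ℝ => l ^ p * (1 - l) ^ p) (Ioc 0 2⁻¹) := by
    have hbase : IntegrableOn (fun l : ℝ => l ^ p) (Ioc (0:ℝ) 2⁻¹) := by
      have := intervalIntegral.intervalIntegrable_rpow' (a := 0) (b := 2⁻¹) hp1
      rwa [intervalIntegrable_iff_integrableOn_Ioc_of_le (by norm_num)] at this
    have hmeas : AEStronglyMeasurable (fun l : ℝ => l ^ p * (1 - l) ^ p)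
        (volume.restrict (Ioc (0:ℝ) 2⁻¹)) := by
      refine ContinuousOn.aestronglyMeasurable (fun l hl => ContinuousAt.continuousWithinAt ?_)
        measurableSet_Ioc
      have hl2 : (0:ℝ) < 1 - l := by
        have := hl.2; norm_num at this ⊢; linarith
      exact (Real.continuousAt_rpow_const _ _ (Or.inl hl.1.ne')).mul
        ((Real.continuousAt_rpow_const (1 - l) _ (Or.inl hl2.ne')).comp
          (continuousAt_const.sub continuousAt_id))
    refine Integrable.mono' (hbase.const_mul ((2:ℝ)⁻¹ ^ p)) hmeas ?_
    rw [ae_restrict_iff' measurableSet_Ioc]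
    filter_upwards with l hl
    have h0l : (0:ℝ) < l := hl.1
    have hl2 : (2:ℝ)⁻¹ ≤ 1 - l := by
      have := hl.2; norm_num at this ⊢; linarith
    rw [Real.norm_eq_abs, abs_of_nonneg (mul_nonneg (Real.rpow_nonneg h0l.le _)
      (Real.rpow_nonneg (by linarith) _))]
    rw [mul_comm ((2:ℝ)⁻¹ ^ p)]
    exact mul_le_mul_of_nonneg_left
      (Real.rpow_le_rpow_of_nonpos (by norm_num) hl2 hp0) (Real.rpow_nonneg h0l.le _)
  have hB : IntegrableOn (fun l : ℝ => l ^ p * (1 - l) ^ p) (Ioo 2⁻¹ 1) := by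
    have hbase : IntegrableOn (fun l : ℝ => (1 - l) ^ p) (Ioo (2⁻¹:ℝ) 1) := by
      have h0 := (intervalIntegral.intervalIntegrable_rpow' (a := 0) (b := 2⁻¹) hp1).comp_sub_left 1
      rw [sub_zero, show (1:ℝ) - 2⁻¹ = 2⁻¹ from by norm_num] at h0
      have h0' := h0.symm
      rwa [intervalIntegrable_iff_integrableOn_Ioo_of_le (by norm_num)] at h0'
    have hmeas : AEStronglyMeasurable (fun l : ℝ => l ^ p * (1 - l) ^ p)
        (volume.restrict (Ioo (2⁻¹:ℝ) 1)) := by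
      refine ContinuousOn.aestronglyMeasurable (fun l hl => ContinuousAt.continuousWithinAt ?_)
        measurableSet_Ioo
      have h0l : (0:ℝ) < l := lt_trans (by norm_num) hl.1
      exact (Real.continuousAt_rpow_const _ _ (Or.inl h0l.ne')).mul
        ((Real.continuousAt_rpow_const (1 - l) _ (Or.inl (sub_pos.mpr hl.2).ne')).comp
          (continuousAt_const.sub continuousAt_id))
    refine Integrable.mono' (hbase.const_mul ((2:ℝ)⁻¹ ^ p)) hmeas ?_
    rw [ae_restrict_iff' measurableSet_Ioo]
    filter_upwards with l hl
    have h0l : (0:ℝ) < l := lt_trans (by norm_num) hl.1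
    rw [Real.norm_eq_abs, abs_of_nonneg (mul_nonneg (Real.rpow_nonneg h0l.le _)
      (Real.rpow_nonneg (by linarith [hl.2]) _))]
    exact mul_le_mul_of_nonneg_right
      (Real.rpow_le_rpow_of_nonpos (by norm_num) hl.1.le hp0)
      (Real.rpow_nonneg (by linarith [hl.2]) _)
  have := hA.union hB
  rwa [Set.Ioc_union_Ioo_eq_Ioo (by norm_num) (by norm_num)] at this


private lemma integrableJ {β : ℝ} (hβ1 : 1 < β) (hβ2 : β < 2) {α : ℝ} (hα : 0 < α) :
    IntegrableOn (fun l : ℝ =>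
      l ^ (-(β / 2)) * min (α ^ β * (1 - l) ^ (-(β / 2))) (l ^ (-(β / 2)))) (Ioo 0 1) := by
  have hp1 : -1 < -(β / 2) := by linarith
  have hp0 : -(β / 2) ≤ 0 := by linarith
  have hg : IntegrableOn
      (fun l : ℝ => α ^ β * (l ^ (-(β / 2)) * (1 - l) ^ (-(β / 2)))) (Ioo 0 1) :=
    (integrableBeta hp1 hp0).const_mul _
  refine Integrable.mono' hg ((JcontOn β α).aestronglyMeasurable measurableSet_Ioo) ?_
  rw [ae_restrict_iff' measurableSet_Ioo]
  filter_upwards with l hl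
  have h0l : (0:ℝ) < l := hl.1
  have h1l : (0:ℝ) < 1 - l := sub_pos.mpr hl.2
  have hmin : 0 ≤ min (α ^ β * (1 - l) ^ (-(β / 2))) (l ^ (-(β / 2))) :=
    le_min (mul_nonneg (Real.rpow_nonneg hα.le _) (Real.rpow_nonneg h1l.le _))
      (Real.rpow_nonneg h0l.le _)
  rw [Real.norm_eq_abs, abs_of_nonneg (mul_nonneg (Real.rpow_nonneg h0l.le _) hmin)]
  calc l ^ (-(β / 2)) * min (α ^ β * (1 - l) ^ (-(β / 2))) (l ^ (-(β / 2)))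
      ≤ l ^ (-(β / 2)) * (α ^ β * (1 - l) ^ (-(β / 2))) :=
        mul_le_mul_of_nonneg_left (min_le_left _ _) (Real.rpow_nonneg h0l.le _)
    _ = α ^ β * (l ^ (-(β / 2)) * (1 - l) ^ (-(β / 2))) := by ring



private lemma Jnonneg {β α : ℝ} (hα : 0 < α) :
    0 ≤ᵐ[volume.restrict (Ioo (0:ℝ) 1)] fun l : ℝ =>
      l ^ (-(β / 2)) * min (α ^ β * (1 - l) ^ (-(β / 2))) (l ^ (-(β / 2))) := by
  filter_upwards [ae_restrict_mem measurableSet_Ioo] with l hl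
  exact mul_nonneg (Real.rpow_nonneg hl.1.le _)
    (le_min (mul_nonneg (Real.rpow_nonneg hα.le _)
      (Real.rpow_nonneg (by linarith [hl.2]) _)) (Real.rpow_nonneg hl.1.le _))

private lemma Jlow_small {β : ℝ} (hβ1 : 1 < β) (hβ2 : β < 2) {α : ℝ}
    (hα : 0 < α) (hα1 : α < 1) :
    ((2:ℝ)⁻¹ ^ (-(β / 2) + 1) / (-(β / 2) + 1)) * α ^ β ≤ Jbeta β α := by
  have hp1 : -1 < -(β / 2) := by linarith
  have hJint := integrableJ hβ1 hβ2 hα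
  have h1 : (∫ l in Ioo (0:ℝ) 2⁻¹,
      l ^ (-(β / 2)) * min (α ^ β * (1 - l) ^ (-(β / 2))) (l ^ (-(β / 2)))) ≤ Jbeta β α :=
    setIntegral_mono_set hJint (Jnonneg hα)
      ((Ioo_subset_Ioo le_rfl (by norm_num)).eventuallyLE)
  have h2 : (∫ l in Ioo (0:ℝ) 2⁻¹, α ^ β * l ^ (-(β / 2))) ≤
      ∫ l in Ioo (0:ℝ) 2⁻¹,
        l ^ (-(β / 2)) * min (α ^ β * (1 - l) ^ (-(β / 2))) (l ^ (-(β / 2))) := by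
    refine setIntegral_mono_on
      (((intervalIntegral.integrableOn_Ioo_rpow_iff (by norm_num)).mpr hp1).const_mul _)
      (hJint.mono_set (Ioo_subset_Ioo le_rfl (by norm_num))) measurableSet_Ioo ?_
    intro l hl
    have h0l : (0:ℝ) < l := hl.1
    have hl2 : l < 1 := lt_trans hl.2 (by norm_num)
    have hA : α ^ β ≤ l ^ (-(β / 2)) :=
      le_trans (Real.rpow_le_one hα.le hα1.le (by linarith))
        (Real.one_le_rpow_of_pos_of_le_one_of_nonpos h0l hl2.le (by linarith))
    have hB : α ^ β ≤ α ^ β * (1 - l) ^ (-(β / 2)) := by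
      nth_rewrite 1 [← mul_one (α ^ β)]
      exact mul_le_mul_of_nonneg_left
        (Real.one_le_rpow_of_pos_of_le_one_of_nonpos (by linarith) (by linarith) (by linarith))
        (Real.rpow_nonneg hα.le _)
    calc α ^ β * l ^ (-(β / 2)) = l ^ (-(β / 2)) * α ^ β := mul_comm _ _
      _ ≤ l ^ (-(β / 2)) * min (α ^ β * (1 - l) ^ (-(β / 2))) (l ^ (-(β / 2))) :=
        mul_le_mul_of_nonneg_left (le_min hB hA) (Real.rpow_nonneg h0l.le _)
  have h3 : (∫ l in Ioo (0:ℝ) 2⁻¹, α ^ β * l ^ (-(β / 2)))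
      = α ^ β * ((2:ℝ)⁻¹ ^ (-(β / 2) + 1) / (-(β / 2) + 1)) := by
    rw [integral_const_mul, int_Ioo_rpow_zero hp1 (by norm_num)]
  rw [mul_comm]
  rw [← h3]
  exact le_trans h2 h1

private lemma Jhigh_small {β : ℝ} (hβ1 : 1 < β) (hβ2 : β < 2) {α : ℝ} (hα : 0 < α) :
    Jbeta β α ≤ (∫ l in Ioo (0:ℝ) 1, l ^ (-(β / 2)) * (1 - l) ^ (-(β / 2))) * α ^ β := by
  have hp1 : -1 < -(β / 2) := by linarith
  have hp0 : -(β / 2) ≤ 0 := by linarith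
  have hbeta := integrableBeta hp1 hp0
  have h1 : Jbeta β α ≤ ∫ l in Ioo (0:ℝ) 1,
      α ^ β * (l ^ (-(β / 2)) * (1 - l) ^ (-(β / 2))) := by
    refine setIntegral_mono_on (integrableJ hβ1 hβ2 hα) (hbeta.const_mul _)
      measurableSet_Ioo ?_
    intro l hl
    calc l ^ (-(β / 2)) * min (α ^ β * (1 - l) ^ (-(β / 2))) (l ^ (-(β / 2)))
        ≤ l ^ (-(β / 2)) * (α ^ β * (1 - l) ^ (-(β / 2))) :=
          mul_le_mul_of_nonneg_left (min_le_left _ _) (Real.rpow_nonneg hl.1.le _)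
      _ = α ^ β * (l ^ (-(β / 2)) * (1 - l) ^ (-(β / 2))) := by ring
  rw [integral_const_mul] at h1
  rw [mul_comm]
  exact h1



private lemma Jlow_large {β : ℝ} (hβ1 : 1 < β) (hβ2 : β < 2) {α : ℝ} (hα : 1 ≤ α) :
    2⁻¹ * α ^ (2 * β - 2) ≤ Jbeta β α := by
  have hα0 : (0:ℝ) < α := lt_of_lt_of_le one_pos hα
  have hJint := integrableJ hβ1 hβ2 hα0
  set a := α ^ (-2:ℝ) with ha_def
  have ha0 : 0 < a := Real.rpow_pos_of_pos hα0 _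
  have ha1 : a ≤ 1 := Real.rpow_le_one_of_one_le_of_nonpos hα (by norm_num)
  have hm0 : 0 < a * 2⁻¹ := by positivity
  have hma : a * 2⁻¹ < a := by linarith
  have hsub : Ioo (a * 2⁻¹) a ⊆ Ioo (0:ℝ) 1 := fun x hx =>
    ⟨lt_trans hm0 hx.1, lt_of_lt_of_le hx.2 ha1⟩
  have hpt : ∀ l ∈ Ioo (a * 2⁻¹) a, α ^ (2 * β) ≤
      l ^ (-(β / 2)) * min (α ^ β * (1 - l) ^ (-(β / 2))) (l ^ (-(β / 2))) := by
    intro l hl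
    have h0l : (0:ℝ) < l := lt_trans hm0 hl.1
    have hl1 : l < 1 := lt_of_lt_of_le hl.2 ha1
    have e : a ^ (-(β / 2)) = α ^ β := by
      rw [ha_def, ← Real.rpow_mul hα0.le, show (-2:ℝ) * (-(β / 2)) = β from by ring]
    have hlp : α ^ β ≤ l ^ (-(β / 2)) := by
      rw [← e]
      exact Real.rpow_le_rpow_of_nonpos h0l hl.2.le (by linarith)
    have hB : α ^ β ≤ α ^ β * (1 - l) ^ (-(β / 2)) := by
      nth_rewrite 1 [← mul_one (α ^ β)]
      exact mul_le_mul_of_nonneg_left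
        (Real.one_le_rpow_of_pos_of_le_one_of_nonpos (by linarith) (by linarith) (by linarith))
        (Real.rpow_nonneg hα0.le _)
    calc α ^ (2 * β) = α ^ β * α ^ β := by
          rw [show 2 * β = β + β from by ring, Real.rpow_add hα0]
      _ ≤ l ^ (-(β / 2)) * min (α ^ β * (1 - l) ^ (-(β / 2))) (l ^ (-(β / 2))) :=
          mul_le_mul hlp (le_min hB hlp) (Real.rpow_nonneg hα0.le _)
            (Real.rpow_nonneg h0l.le _)
  have hconst : (a - a * 2⁻¹) * α ^ (2 * β) ≤ ∫ l in Ioo (a * 2⁻¹) a,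
      l ^ (-(β / 2)) * min (α ^ β * (1 - l) ^ (-(β / 2))) (l ^ (-(β / 2))) := by
    have := setIntegral_mono_on (integrableOn_const measure_Ioo_lt_top.ne)
      (hJint.mono_set hsub) measurableSet_Ioo hpt
    rwa [setIntegral_const, Real.volume_real_Ioo_of_le (by linarith),
      smul_eq_mul] at this
  have hS : (∫ l in Ioo (a * 2⁻¹) a,
      l ^ (-(β / 2)) * min (α ^ β * (1 - l) ^ (-(β / 2))) (l ^ (-(β / 2)))) ≤ Jbeta β α :=
    setIntegral_mono_set hJint (Jnonneg hα0) hsub.eventuallyLE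
  have e2 : (a - a * 2⁻¹) * α ^ (2 * β) = 2⁻¹ * α ^ (2 * β - 2) := by
    have h1 : a - a * 2⁻¹ = 2⁻¹ * α ^ (-2:ℝ) := by rw [ha_def]; ring
    rw [h1, mul_assoc, ← Real.rpow_add hα0, show (-2:ℝ) + 2 * β = 2 * β - 2 from by ring]
  rw [← e2]
  exact le_trans hconst hS

private lemma Jhigh_large {β : ℝ} (hβ1 : 1 < β) (hβ2 : β < 2) {α : ℝ} (hα : 1 ≤ α) :
    Jbeta β α ≤ (((2:ℝ)⁻¹ ^ (-(β / 2)) * ((2:ℝ)⁻¹ ^ (-(β / 2) + 1) / (-(β / 2) + 1))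
      + (2:ℝ)⁻¹ ^ (2 * (-(β / 2)) + 1) / (β - 1))) * α ^ (2 * β - 2) := by
  have hα0 : (0:ℝ) < α := lt_of_lt_of_le one_pos hα
  have hp1 : -1 < -(β / 2) := by linarith
  have hJint := integrableJ hβ1 hβ2 hα0
  set a := α ^ (-2:ℝ) with ha_def
  have ha0 : 0 < a := Real.rpow_pos_of_pos hα0 _
  have ha1 : a ≤ 1 := Real.rpow_le_one_of_one_le_of_nonpos hα (by norm_num)
  set m := a * 2⁻¹ with hm_def
  have hm0 : 0 < m := by positivity
  have hmhalf : m ≤ 2⁻¹ := by rw [hm_def]; nlinarith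
  have hm1 : m < 1 := lt_of_le_of_lt hmhalf (by norm_num)
  have hsub1 : Ioo (0:ℝ) m ⊆ Ioo (0:ℝ) 1 := Ioo_subset_Ioo le_rfl hm1.le
  have hsub2 : Ico m 1 ⊆ Ioo (0:ℝ) 1 := fun x hx => ⟨lt_of_lt_of_le hm0 hx.1, hx.2⟩
  have hdisj : Disjoint (Ioo (0:ℝ) m) (Ico m 1) := by
    rw [Set.disjoint_left]; intro x hx hx'; exact absurd hx.2 (not_lt.mpr hx'.1)
  have hsplit : Jbeta β α =
      (∫ l in Ioo (0:ℝ) m,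
        l ^ (-(β / 2)) * min (α ^ β * (1 - l) ^ (-(β / 2))) (l ^ (-(β / 2))))
      + ∫ l in Ico m 1,
        l ^ (-(β / 2)) * min (α ^ β * (1 - l) ^ (-(β / 2))) (l ^ (-(β / 2))) := by
    rw [show Jbeta β α = ∫ l in Ioo (0:ℝ) 1,
        l ^ (-(β / 2)) * min (α ^ β * (1 - l) ^ (-(β / 2))) (l ^ (-(β / 2))) from rfl,
      ← Ioo_union_Ico_eq_Ioo hm0 hm1.le,
      setIntegral_union hdisj measurableSet_Ico (hJint.mono_set hsub1)
        (hJint.mono_set hsub2)]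
  -- part 1
  have hpart1 : (∫ l in Ioo (0:ℝ) m,
      l ^ (-(β / 2)) * min (α ^ β * (1 - l) ^ (-(β / 2))) (l ^ (-(β / 2))))
      ≤ ((2:ℝ)⁻¹ ^ (-(β / 2)) * α ^ β) * (m ^ (-(β / 2) + 1) / (-(β / 2) + 1)) := by
    have hb : (∫ l in Ioo (0:ℝ) m, ((2:ℝ)⁻¹ ^ (-(β / 2)) * α ^ β) * l ^ (-(β / 2)))
        = ((2:ℝ)⁻¹ ^ (-(β / 2)) * α ^ β) * (m ^ (-(β / 2) + 1) / (-(β / 2) + 1)) := by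
      rw [integral_const_mul, int_Ioo_rpow_zero hp1 hm0]
    rw [← hb]
    refine setIntegral_mono_on (hJint.mono_set hsub1)
      (((intervalIntegral.integrableOn_Ioo_rpow_iff hm0).mpr hp1).const_mul _)
      measurableSet_Ioo ?_
    intro l hl
    have h0l : (0:ℝ) < l := hl.1
    have hlhalf : l < 2⁻¹ := lt_of_lt_of_le hl.2 hmhalf
    calc l ^ (-(β / 2)) * min (α ^ β * (1 - l) ^ (-(β / 2))) (l ^ (-(β / 2)))
        ≤ l ^ (-(β / 2)) * (α ^ β * (1 - l) ^ (-(β / 2))) :=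
          mul_le_mul_of_nonneg_left (min_le_left _ _) (Real.rpow_nonneg h0l.le _)
      _ ≤ l ^ (-(β / 2)) * (α ^ β * (2:ℝ)⁻¹ ^ (-(β / 2))) := by
          refine mul_le_mul_of_nonneg_left (mul_le_mul_of_nonneg_left
            (Real.rpow_le_rpow_of_nonpos (by norm_num) (by linarith) (by linarith))
            (Real.rpow_nonneg hα0.le _)) (Real.rpow_nonneg h0l.le _)
      _ = ((2:ℝ)⁻¹ ^ (-(β / 2)) * α ^ β) * l ^ (-(β / 2)) := by ring
  have hmval : m ^ (-(β / 2) + 1) = α ^ (β - 2) * (2:ℝ)⁻¹ ^ (-(β / 2) + 1) := by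
    rw [hm_def, ha_def, Real.mul_rpow (Real.rpow_nonneg hα0.le _) (by norm_num),
      ← Real.rpow_mul hα0.le, show (-2:ℝ) * (-(β / 2) + 1) = β - 2 from by ring]
  have hpart1' : (∫ l in Ioo (0:ℝ) m,
      l ^ (-(β / 2)) * min (α ^ β * (1 - l) ^ (-(β / 2))) (l ^ (-(β / 2))))
      ≤ ((2:ℝ)⁻¹ ^ (-(β / 2)) * ((2:ℝ)⁻¹ ^ (-(β / 2) + 1) / (-(β / 2) + 1)))
        * α ^ (2 * β - 2) := by
    refine le_trans hpart1 (le_of_eq ?_)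
    rw [hmval, show ((2:ℝ)⁻¹ ^ (-(β / 2)) * α ^ β)
        * (α ^ (β - 2) * (2:ℝ)⁻¹ ^ (-(β / 2) + 1) / (-(β / 2) + 1))
        = ((2:ℝ)⁻¹ ^ (-(β / 2)) * ((2:ℝ)⁻¹ ^ (-(β / 2) + 1) / (-(β / 2) + 1)))
          * (α ^ β * α ^ (β - 2)) from by ring,
      ← Real.rpow_add hα0, show β + (β - 2) = 2 * β - 2 from by ring]
  -- part 2
  have hq : 2 * (-(β / 2)) + 1 = -(β - 1) := by ring
  have hint2 : IntegrableOn (fun l : ℝ => l ^ (2 * (-(β / 2)))) (Ico m 1) := by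
    have h := intervalIntegral.intervalIntegrable_rpow (μ := volume)
      (r := 2 * (-(β / 2))) (a := m) (b := 1)
      (Or.inr (notMem_uIcc_of_lt hm0 one_pos))
    rw [intervalIntegrable_iff_integrableOn_Ioc_of_le hm1.le] at h
    exact ((integrableOn_Icc_iff_integrableOn_Ioc).mpr h).mono_set Ico_subset_Icc_self
  have hpart2 : (∫ l in Ico m 1,
      l ^ (-(β / 2)) * min (α ^ β * (1 - l) ^ (-(β / 2))) (l ^ (-(β / 2))))
      ≤ ∫ l in Ico m 1, l ^ (2 * (-(β / 2))) := by
    refine setIntegral_mono_on (hJint.mono_set hsub2) hint2 measurableSet_Ico ?_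
    intro l hl
    have h0l : (0:ℝ) < l := lt_of_lt_of_le hm0 hl.1
    calc l ^ (-(β / 2)) * min (α ^ β * (1 - l) ^ (-(β / 2))) (l ^ (-(β / 2)))
        ≤ l ^ (-(β / 2)) * l ^ (-(β / 2)) :=
          mul_le_mul_of_nonneg_left (min_le_right _ _) (Real.rpow_nonneg h0l.le _)
      _ = l ^ (2 * (-(β / 2))) := by
          rw [show 2 * (-(β / 2)) = -(β / 2) + -(β / 2) from by ring, Real.rpow_add h0l]
  have hval2 : (∫ l in Ico m 1, l ^ (2 * (-(β / 2))))
      = (1 - m ^ (2 * (-(β / 2)) + 1)) / (2 * (-(β / 2)) + 1) := by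
    rw [integral_Ico_eq_integral_Ioo, int_Ioo_rpow_pos (by linarith : 2 * (-(β / 2)) ≠ -1)
      hm0 hm1.le, Real.one_rpow]
  have hmq : m ^ (2 * (-(β / 2)) + 1) = α ^ (2 * β - 2) * (2:ℝ)⁻¹ ^ (2 * (-(β / 2)) + 1) := by
    rw [hm_def, ha_def, Real.mul_rpow (Real.rpow_nonneg hα0.le _) (by norm_num),
      ← Real.rpow_mul hα0.le, show (-2:ℝ) * (2 * (-(β / 2)) + 1) = 2 * β - 2 from by ring]
  have hpart2' : (∫ l in Ico m 1, l ^ (2 * (-(β / 2))))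
      ≤ ((2:ℝ)⁻¹ ^ (2 * (-(β / 2)) + 1) / (β - 1)) * α ^ (2 * β - 2) := by
    rw [hval2, hq]
    have h1 : (1 - m ^ (-(β - 1))) / -(β - 1) = (m ^ (-(β - 1)) - 1) / (β - 1) := by
      rw [div_neg, ← neg_div, neg_sub]
    rw [h1]
    have h2 : (m ^ (-(β - 1)) - 1) / (β - 1) ≤ m ^ (-(β - 1)) / (β - 1) := by
      gcongr
      · linarith
    refine le_trans h2 (le_of_eq ?_)
    rw [← hq, hmq]
    ring
  rw [hsplit]
  calc (∫ l in Ioo (0:ℝ) m,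
        l ^ (-(β / 2)) * min (α ^ β * (1 - l) ^ (-(β / 2))) (l ^ (-(β / 2))))
      + ∫ l in Ico m 1,
        l ^ (-(β / 2)) * min (α ^ β * (1 - l) ^ (-(β / 2))) (l ^ (-(β / 2)))
      ≤ ((2:ℝ)⁻¹ ^ (-(β / 2)) * ((2:ℝ)⁻¹ ^ (-(β / 2) + 1) / (-(β / 2) + 1)))
          * α ^ (2 * β - 2)
        + ((2:ℝ)⁻¹ ^ (2 * (-(β / 2)) + 1) / (β - 1)) * α ^ (2 * β - 2) :=
        add_le_add hpart1' (le_trans hpart2 hpart2')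
    _ = (((2:ℝ)⁻¹ ^ (-(β / 2)) * ((2:ℝ)⁻¹ ^ (-(β / 2) + 1) / (-(β / 2) + 1))
        + (2:ℝ)⁻¹ ^ (2 * (-(β / 2)) + 1) / (β - 1))) * α ^ (2 * β - 2) := by ring

end JbetaAux

/-- For `1 < β < 2` there are `0 < c ≤ C` (depending only on `β`) with
`c α^β ≤ J_β(α) ≤ C α^β` for `0 < α < 1` and
`c α^{2β-2} ≤ J_β(α) ≤ C α^{2β-2}` for `α ≥ 1`. -/

theorem Jbeta_asymp (β : ℝ) (hβ1 : 1 < β) (hβ2 : β < 2) :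
    ∃ c C : ℝ, 0 < c ∧ c ≤ C ∧
      (∀ α : ℝ, 0 < α → α < 1 → c * α ^ β ≤ Jbeta β α ∧ Jbeta β α ≤ C * α ^ β) ∧
      (∀ α : ℝ, 1 ≤ α →
        c * α ^ (2 * β - 2) ≤ Jbeta β α ∧ Jbeta β α ≤ C * α ^ (2 * β - 2)) := by
  set c1 := (2:ℝ)⁻¹ ^ (-(β / 2) + 1) / (-(β / 2) + 1) with hc1_def
  have hc1 : 0 < c1 :=
    div_pos (Real.rpow_pos_of_pos (by norm_num) _) (by linarith)
  set K := ∫ l in Set.Ioo (0:ℝ) 1, l ^ (-(β / 2)) * (1 - l) ^ (-(β / 2)) with hK_def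
  set D : ℝ := (2:ℝ)⁻¹ ^ (-(β / 2)) * ((2:ℝ)⁻¹ ^ (-(β / 2) + 1) / (-(β / 2) + 1))
      + (2:ℝ)⁻¹ ^ (2 * (-(β / 2)) + 1) / (β - 1) with hD_def
  refine ⟨min c1 2⁻¹, max (max K D) (min c1 2⁻¹), lt_min hc1 (by norm_num),
    le_max_right _ _, ?_, ?_⟩
  · intro α hα hα1
    constructor
    · exact le_trans (mul_le_mul_of_nonneg_right (min_le_left _ _)
        (Real.rpow_nonneg hα.le _)) (Jlow_small hβ1 hβ2 hα hα1)
    · exact le_trans (Jhigh_small hβ1 hβ2 hα)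
        (mul_le_mul_of_nonneg_right ((le_max_left K D).trans (le_max_left _ _))
          (Real.rpow_nonneg hα.le _))
  · intro α hα
    have hα0 : (0:ℝ) < α := lt_of_lt_of_le one_pos hα
    constructor
    · exact le_trans (mul_le_mul_of_nonneg_right (min_le_right _ _)
        (Real.rpow_nonneg hα0.le _)) (Jlow_large hβ1 hβ2 hα)
    · exact le_trans (Jhigh_large hβ1 hβ2 hα)
        (mul_le_mul_of_nonneg_right ((le_max_right K D).trans (le_max_left _ _))
          (Real.rpow_nonneg hα0.le _))
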